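/- arXiv:1711.02075 — 2 statements merged into one kernel-verified Lean document; each statement's English description precedes it below -/
import Mathlib

section
/- Let s ∈ (0,1), α ∈ (0,s), β ∈ (0,1), and let θ : (0,∞) → (0,∞) be nonincreasing. Suppose that for some r > 0, a function w : Q_{2r} → ℝ and symmetric n×n matrices A_r and A_{2r} satisfy [w − xᵀA_ρ x]_{C_{t,x}^{β/(2s),β}(Q_ρ)} ≤ θ(ρ)·ρ^{α+s} for ρ = r and ρ = 2r, where xᵀA_ρ x denotes the quadratic form as a function of x (constant in t). Then ‖A_{2r} − A_r‖ ≤ C·θ(r)·r^{α+β+s−2}, where ‖M‖ = sup_{|x|=1} |xᵀMx| and C depends only on n, s, α and β. -/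
open Set MeasureTheory Metric Topology Filter
noncomputable section

/-- `ℝ^n` as Euclidean space. -/
abbrev En (n : ℕ) := EuclideanSpace ℝ (Fin n)

/-- The last coordinate `x_n` of a point `x ∈ ℝ^n`. -/
def lastC {n : ℕ} (x : En n) : ℝ := if h : 0 < n then x ⟨n - 1, by omega⟩ else 0

/-- The unit vector `e_n ∈ ℝ^n`. -/
def eLast (n : ℕ) : En n := if h : 0 < n then EuclideanSpace.single ⟨n - 1, by omega⟩ (1 : ℝ) else 0

/-- Ellipticity bounds `λ ≤ a ≤ Λ` on the unit sphere. -/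
def KernelBounds {n : ℕ} (lam Lam : ℝ) (a : En n → ℝ) : Prop :=
  ∀ y : En n, ‖y‖ = 1 → lam ≤ a y ∧ a y ≤ Lam

/-- `‖a‖_{C^{1,γ}(S^{n-1})} ≤ A`. -/
def SphereC1GammaBound {n : ℕ} (γ A : ℝ) (a : En n → ℝ) : Prop :=
  ∃ g : En n → (En n →L[ℝ] ℝ),
    (∀ y ∈ sphere (0 : En n) 1, HasFDerivWithinAt a (g y) (sphere (0 : En n) 1) y) ∧
    (∀ y ∈ sphere (0 : En n) 1, |a y| ≤ A ∧ ‖g y‖ ≤ A) ∧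
    (∀ y ∈ sphere (0 : En n) 1, ∀ z ∈ sphere (0 : En n) 1, ‖g y - g z‖ ≤ A * ‖y - z‖ ^ γ)

/-- The integrand of the nonlocal operator (1.3). -/
def Lintegrand (n : ℕ) (s : ℝ) (a u : En n → ℝ) (x y : En n) : ℝ :=
  (u (x + y) + u (x - y) - 2 * u x) * a (‖y‖⁻¹ • y) / ‖y‖ ^ ((n : ℝ) + 2 * s)

/-- The nonlocal operator `L` of the form (1.3). -/
def Lop (n : ℕ) (s : ℝ) (a u : En n → ℝ) (x : En n) : ℝ := ∫ y : En n, Lintegrand n s a u x y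

/-- `u` solves `∂_t u - L u = f` pointwise at `(t,x)`, the integral defining `Lu`
being absolutely convergent. -/
def SolvesAt (n : ℕ) (s : ℝ) (a : En n → ℝ) (u f : ℝ → En n → ℝ) (t : ℝ) (x : En n) : Prop :=
  Integrable (Lintegrand n s a (u t) x) ∧
  HasDerivAt (fun τ : ℝ => u τ x) (Lop n s a (u t) x + f t x) t

/-- `‖w‖_{L^∞(I×D)} ≤ M`. -/
def SupBnd {n : ℕ} (M : ℝ) (I : Set ℝ) (D : Set (En n)) (w : ℝ → En n → ℝ) : Prop :=
  ∀ t ∈ I, ∀ x ∈ D, |w t x| ≤ M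

/-- `[w]_{C_{t,x}^{θ/2s,θ}(I×D)} ≤ M`, for `θ ∈ (0,1)`. -/
def ParHolderBnd {n : ℕ} (s θ M : ℝ) (I : Set ℝ) (D : Set (En n)) (w : ℝ → En n → ℝ) : Prop :=
  ∀ t ∈ I, ∀ x ∈ D, ∀ t' ∈ I, ∀ x' ∈ D,
    |w t x - w t' x'| ≤ M * (|t - t'| ^ (θ / (2 * s)) + ‖x - x'‖ ^ θ)

/-- `[w]_{C_t^α(I×D)} ≤ M`. -/
def TimeHolderBnd {n : ℕ} (α M : ℝ) (I : Set ℝ) (D : Set (En n)) (w : ℝ → En n → ℝ) : Prop :=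
  ∀ x ∈ D, ∀ t ∈ I, ∀ t' ∈ I, |w t x - w t' x| ≤ M * |t - t'| ^ α

/-- Spatial gradient `∇_x w`. -/
def SpaceGrad {n : ℕ} (w : ℝ → En n → ℝ) (t : ℝ) (x : En n) : En n →L[ℝ] ℝ := fderiv ℝ (w t) x

/-- Spatial Hessian `D²_x w`. -/
def SpaceHess {n : ℕ} (w : ℝ → En n → ℝ) (t : ℝ) (x : En n) :
    ContinuousMultilinearMap ℝ (fun _ : Fin 2 => En n) ℝ := iteratedFDeriv ℝ 2 (w t) x

/-- Time derivative `∂_t w`. -/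
def TimeDeriv {n : ℕ} (w : ℝ → En n → ℝ) (t : ℝ) (x : En n) : ℝ := deriv (fun τ => w τ x) t

/-- `‖∇_x w‖_{L^∞(I×D)} ≤ M`. -/
def GradSupBnd {n : ℕ} (M : ℝ) (I : Set ℝ) (D : Set (En n)) (w : ℝ → En n → ℝ) : Prop :=
  ∀ t ∈ I, ∀ x ∈ D, ‖SpaceGrad w t x‖ ≤ M

/-- `[∇_x w]_{C_{t,x}^{θ/2s,θ}(I×D)} ≤ M`. -/
def GradParHolderBnd {n : ℕ} (s θ M : ℝ) (I : Set ℝ) (D : Set (En n)) (w : ℝ → En n → ℝ) : Prop :=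
  ∀ t ∈ I, ∀ x ∈ D, ∀ t' ∈ I, ∀ x' ∈ D,
    ‖SpaceGrad w t x - SpaceGrad w t' x'‖ ≤ M * (|t - t'| ^ (θ / (2 * s)) + ‖x - x'‖ ^ θ)

/-- `[∇_x w]_{C_t^α(I×D)} ≤ M`. -/
def GradTimeHolderBnd {n : ℕ} (α M : ℝ) (I : Set ℝ) (D : Set (En n)) (w : ℝ → En n → ℝ) : Prop :=
  ∀ x ∈ D, ∀ t ∈ I, ∀ t' ∈ I, ‖SpaceGrad w t x - SpaceGrad w t' x‖ ≤ M * |t - t'| ^ α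

/-- `[w]_{C_{t,x}^{θ/2s,θ}(I×D)} ≤ M`, covering both `θ ∈ (0,1)` and `θ ∈ (1,2)`. -/
def ParSemiBnd {n : ℕ} (s θ M : ℝ) (I : Set ℝ) (D : Set (En n)) (w : ℝ → En n → ℝ) : Prop :=
  (θ < 1 → ParHolderBnd s θ M I D w) ∧
  (1 < θ → TimeHolderBnd (θ / (2 * s)) M I D w ∧ GradParHolderBnd s (θ - 1) M I D w)

/-- `‖w‖_{C_{t,x}^{θ/2s,θ}(I×D)} ≤ M`, covering both `θ ∈ (0,1)` and `θ ∈ (1,2)`. -/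
def ParNormBnd {n : ℕ} (s θ M : ℝ) (I : Set ℝ) (D : Set (En n)) (w : ℝ → En n → ℝ) : Prop :=
  SupBnd M I D w ∧ (1 < θ → GradSupBnd M I D w) ∧ ParSemiBnd s θ M I D w

/-- `[w]_{C_{t,x}^{(α+β+s)/2s, α+β+s}(I×D)} ≤ M`, the higher-order parabolic seminorm
`[∂_t w]_{C^{(α+β-s)/2s, α+β-s}} + [∇_x w]_{C_t^{(α+β-s)/2s}} + [D²_x w]_{C^{(α+β-3s)/2s, α+β+s-2}}`,
each term being present when the corresponding exponent is positive. -/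
def HighSemiBnd {n : ℕ} (s α β M : ℝ) (I : Set ℝ) (D : Set (En n)) (w : ℝ → En n → ℝ) : Prop :=
  (0 < α + β - s → α + β - s < 1 → ParHolderBnd s (α + β - s) M I D (TimeDeriv w)) ∧
  (0 < α + β - s → GradTimeHolderBnd ((α + β - s) / (2 * s)) M I D w) ∧
  (0 < α + β + s - 2 → ∀ t ∈ I, ∀ x ∈ D, ∀ x' ∈ D,
      ‖SpaceHess w t x - SpaceHess w t x'‖ ≤ M * ‖x - x'‖ ^ (α + β + s - 2)) ∧
  (0 < α + β - 3 * s → ∀ x ∈ D, ∀ t ∈ I, ∀ t' ∈ I,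
      ‖SpaceHess w t x - SpaceHess w t' x‖ ≤ M * |t - t'| ^ ((α + β - 3 * s) / (2 * s)))

/-- `Γ` is a `C^{2,γ}` surface splitting `ℝ^n` into `Ω^+` and `Ω^-` with norm smaller
than 1: it is the graph `{x_n = φ(x')}` of a `C^{2,γ}` function `φ` (independent of the last
coordinate) with `C^{2,γ}` norm smaller than 1, passing through `0` with normal `e_n` there,
and `Ω^± = {±(x_n - φ) > 0}`. -/
def IsSplitSurface {n : ℕ} (γ : ℝ) (φ : En n → ℝ) (Ωp Ωm : Set (En n)) : Prop :=
  (∀ x y : En n, (∀ i : Fin n, (i : ℕ) ≠ n - 1 → x i = y i) → φ x = φ y) ∧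
  ContDiff ℝ 2 φ ∧ φ 0 = 0 ∧ fderiv ℝ φ 0 = 0 ∧
  (∃ c < (1 : ℝ),
    (∀ x, |φ x| + ‖fderiv ℝ φ x‖ + ‖iteratedFDeriv ℝ 2 φ x‖ ≤ c) ∧
    (∀ x y, ‖iteratedFDeriv ℝ 2 φ x - iteratedFDeriv ℝ 2 φ y‖ ≤ c * ‖x - y‖ ^ γ)) ∧
  Ωp = {x | φ x < lastC x} ∧ Ωm = {x | lastC x < φ x}

/-- `d` is a `C^{2,γ}(closure Ω^+)` function coinciding with `dist(·,Ω^-)` in a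
neighborhood of `Γ ∩ B_4` and vanishing outside `B_5`. -/
def IsDistLike {n : ℕ} (γ : ℝ) (Ωp Ωm : Set (En n)) (d : En n → ℝ) : Prop :=
  ContDiffOn ℝ 2 d (closure Ωp) ∧
  (∃ M : ℝ, ∀ x ∈ closure Ωp, ∀ y ∈ closure Ωp,
    ‖iteratedFDerivWithin ℝ 2 d (closure Ωp) x - iteratedFDerivWithin ℝ 2 d (closure Ωp) y‖
      ≤ M * ‖x - y‖ ^ γ) ∧
  (∃ U : Set (En n), IsOpen U ∧ frontier Ωp ∩ ball (0 : En n) 4 ⊆ U ∧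
    ∀ x ∈ U, d x = infDist x Ωm) ∧
  (∀ x : En n, x ∉ ball (0 : En n) 5 → d x = 0)

/-
Subtracting the two quadratic approximations of `w` cancels `w`, so at a fixed time the quadratic
form `q(x) = xᵀ(A_{2r} - A_r)x` is `β`-Hölder on `B_r` with constant `θ(r) r^{α+s} + θ(2r) (2r)^{α+s}`.
Comparing `q` at `0` and at `(r/2)x` with `|x| = 1` gives `(r/2)² |q(x)| ≤ (1 + 2^{α+s}) θ(r) r^{α+s} r^β`,
using that `θ` is nonincreasing.
-/

def quadForm {ι : Type*} [Fintype ι] (A : Matrix ι ι ℝ) (x : EuclideanSpace ℝ ι) : ℝ :=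
  ∑ i, ∑ j, x i * A i j * x j

section quadForm

variable {ι : Type*} [Fintype ι]

@[simp]
lemma quadForm_zero_right (A : Matrix ι ι ℝ) : quadForm A 0 = 0 := by
  simp [quadForm]

lemma quadForm_smul (A : Matrix ι ι ℝ) (c : ℝ) (x : EuclideanSpace ℝ ι) :
    quadForm A (c • x) = c ^ 2 * quadForm A x := by
  simp only [quadForm, PiLp.smul_apply, smul_eq_mul, Finset.mul_sum]
  refine Finset.sum_congr rfl fun i _ => Finset.sum_congr rfl fun j _ => ?_
  ring

lemma quadForm_sub (A B : Matrix ι ι ℝ) (x : EuclideanSpace ℝ ι) :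
    quadForm (A - B) x = quadForm A x - quadForm B x := by
  simp only [quadForm, Matrix.sub_apply, ← Finset.sum_sub_distrib]
  refine Finset.sum_congr rfl fun i _ => Finset.sum_congr rfl fun j _ => ?_
  ring

end quadForm

section ParHolderBnd

variable {n : ℕ} {s θ M : ℝ} {I : Set ℝ} {D : Set (En n)} {w : ℝ → En n → ℝ}

lemma ParHolderBnd.mono {I' : Set ℝ} {D' : Set (En n)} (h : ParHolderBnd s θ M I D w)
    (hI : I' ⊆ I) (hD : D' ⊆ D) : ParHolderBnd s θ M I' D' w :=
  fun t ht x hx t' ht' x' hx' => h t (hI ht) x (hD hx) t' (hI ht') x' (hD hx')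

lemma ParHolderBnd.abs_sub_le_of_eq_time (h : ParHolderBnd s θ M I D w) (hs : s ≠ 0)
    (hθ : θ ≠ 0) {t : ℝ} (ht : t ∈ I) {x x' : En n} (hx : x ∈ D) (hx' : x' ∈ D) :
    |w t x - w t x'| ≤ M * ‖x - x'‖ ^ θ := by
  have hexp : θ / (2 * s) ≠ 0 := div_ne_zero hθ (mul_ne_zero two_ne_zero hs)
  simpa [Real.zero_rpow hexp] using h t ht x hx t ht x' hx'

lemma abs_quadForm_sub_le_of_parHolderBnd (hs : s ≠ 0) (hθ : θ ≠ 0) {M₁ M₂ : ℝ}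
    {A₁ A₂ : Matrix (Fin n) (Fin n) ℝ}
    (h₁ : ParHolderBnd s θ M₁ I D (fun t x => w t x - quadForm A₁ x))
    (h₂ : ParHolderBnd s θ M₂ I D (fun t x => w t x - quadForm A₂ x))
    (hI : I.Nonempty) {x x' : En n} (hx : x ∈ D) (hx' : x' ∈ D) :
    |quadForm (A₂ - A₁) x - quadForm (A₂ - A₁) x'| ≤ (M₁ + M₂) * ‖x - x'‖ ^ θ := by
  obtain ⟨t, ht⟩ := hI
  have e₁ := h₁.abs_sub_le_of_eq_time hs hθ ht hx hx'
  have e₂ := h₂.abs_sub_le_of_eq_time hs hθ ht hx hx'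
  rw [quadForm_sub, quadForm_sub]
  calc _ = |(w t x - quadForm A₁ x - (w t x' - quadForm A₁ x'))
          - (w t x - quadForm A₂ x - (w t x' - quadForm A₂ x'))| := by congr 1; ring
    _ ≤ _ := (abs_sub _ _).trans (by linarith)

end ParHolderBnd

lemma antitoneOn_mul_rpow_two_mul_le {f : ℝ → ℝ} (hf : AntitoneOn f (Ioi 0)) {r : ℝ} (hr : 0 < r)
    (a : ℝ) : f (2 * r) * (2 * r) ^ a ≤ 2 ^ a * (f r * r ^ a) := by
  have hfr : f (2 * r) ≤ f r := hf hr (mem_Ioi.2 (by positivity)) (by linarith)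
  rw [Real.mul_rpow zero_le_two hr.le]
  nlinarith [mul_le_mul_of_nonneg_right hfr (by positivity : 0 ≤ 2 ^ a * r ^ a)]

theorem stmt_11_general
    (n : ℕ) (s α β : ℝ)
    (hs : s ∈ Ioo (0 : ℝ) 1) (hβ : β ∈ Ioo (0 : ℝ) 1) :
    ∃ C : ℝ, 0 < C ∧
      ∀ (θf : ℝ → ℝ) (w : ℝ → En n → ℝ) (A₁ A₂ : Matrix (Fin n) (Fin n) ℝ) (r : ℝ),
        0 < r →
        (∀ x > (0 : ℝ), 0 < θf x) → AntitoneOn θf (Ioi 0) →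
        A₁.IsSymm → A₂.IsSymm →
        -- `[w - xᵀA_r x]_{C^{β/2s,β}(Q_r)} ≤ θ(r) r^{α+s}`
        ParHolderBnd s β (θf r * r ^ (α + s)) (Ioo (-(r ^ (2 * s))) 0) (ball (0 : En n) r)
          (fun t x => w t x - ∑ i, ∑ j, x i * A₁ i j * x j) →
        -- `[w - xᵀA_{2r} x]_{C^{β/2s,β}(Q_{2r})} ≤ θ(2r) (2r)^{α+s}`
        ParHolderBnd s β (θf (2 * r) * (2 * r) ^ (α + s)) (Ioo (-((2 * r) ^ (2 * s))) 0)
          (ball (0 : En n) (2 * r))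
          (fun t x => w t x - ∑ i, ∑ j, x i * A₂ i j * x j) →
        -- conclusion: `‖A_{2r} - A_r‖ ≤ C θ(r) r^{α+β+s-2}`
        ∀ x : En n, ‖x‖ = 1 →
          |∑ i, ∑ j, x i * (A₂ - A₁) i j * x j| ≤ C * θf r * r ^ (α + β + s - 2) := by
  refine ⟨4 * (1 + 2 ^ (α + s)), by positivity, ?_⟩
  intro θf w A₁ A₂ r hr hθpos hθanti _ _ h₁ h₂ x hx
  have hQr : Ioo (-(r ^ (2 * s))) 0 ⊆ Ioo (-((2 * r) ^ (2 * s))) 0 := by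
    gcongr <;> linarith [hs.1]
  have hx' : (r / 2) • x ∈ ball (0 : En n) r := by
    rw [mem_ball_zero_iff, norm_smul, hx, Real.norm_of_nonneg (by positivity)]
    linarith
  have hI : (Ioo (-(r ^ (2 * s))) 0).Nonempty := nonempty_Ioo.2 (neg_lt_zero.2 (by positivity))
  have hq := abs_quadForm_sub_le_of_parHolderBnd hs.1.ne' hβ.1.ne' h₁
    (h₂.mono hQr (ball_subset_ball (by linarith))) hI hx' (mem_ball_self hr)
  rw [quadForm_zero_right, sub_zero, sub_zero, quadForm_smul, norm_smul, hx,
    Real.norm_of_nonneg (by positivity), mul_one, abs_mul, abs_of_pos (by positivity)] at hq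
  have hM := antitoneOn_mul_rpow_two_mul_le hθanti hr (α + s)
  have hrβ : (r / 2) ^ β ≤ r ^ β := Real.rpow_le_rpow (by positivity) (by linarith) hβ.1.le
  have hexp : r ^ (α + s) * r ^ β = r ^ (α + β + s - 2) * r ^ 2 := by
    rw [← Real.rpow_natCast r 2, ← Real.rpow_add hr, ← Real.rpow_add hr]
    ring_nf
  change |quadForm (A₂ - A₁) x| ≤ _
  have hθr := hθpos r hr
  refine le_of_mul_le_mul_right (a := r ^ 2 / 4) ?_ (by positivity)
  have hMsum : θf r * r ^ (α + s) + θf (2 * r) * (2 * r) ^ (α + s)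
      ≤ (1 + 2 ^ (α + s)) * (θf r * r ^ (α + s)) := by linarith
  calc |quadForm (A₂ - A₁) x| * (r ^ 2 / 4) = (r / 2) ^ 2 * |quadForm (A₂ - A₁) x| := by ring
    _ ≤ _ := hq
    _ ≤ (1 + 2 ^ (α + s)) * (θf r * r ^ (α + s)) * r ^ β :=
        mul_le_mul hMsum hrβ (by positivity) (by positivity)
    _ = (1 + 2 ^ (α + s)) * θf r * (r ^ (α + s) * r ^ β) := by ring
    _ = _ := by rw [hexp]; ring

/-- control of the difference of quadratic approximations at dyadic scales. -/
theorem stmt_11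
    (n : ℕ) (s α β : ℝ)
    (hs : s ∈ Ioo (0 : ℝ) 1) (hα : α ∈ Ioo 0 s) (hβ : β ∈ Ioo (0 : ℝ) 1) :
    ∃ C : ℝ, 0 < C ∧
      ∀ (θf : ℝ → ℝ) (w : ℝ → En n → ℝ) (A₁ A₂ : Matrix (Fin n) (Fin n) ℝ) (r : ℝ),
        0 < r →
        (∀ x > (0 : ℝ), 0 < θf x) → AntitoneOn θf (Ioi 0) →
        A₁.IsSymm → A₂.IsSymm →
        -- `[w - xᵀA_r x]_{C^{β/2s,β}(Q_r)} ≤ θ(r) r^{α+s}`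
        ParHolderBnd s β (θf r * r ^ (α + s)) (Ioo (-(r ^ (2 * s))) 0) (ball (0 : En n) r)
          (fun t x => w t x - ∑ i, ∑ j, x i * A₁ i j * x j) →
        -- `[w - xᵀA_{2r} x]_{C^{β/2s,β}(Q_{2r})} ≤ θ(2r) (2r)^{α+s}`
        ParHolderBnd s β (θf (2 * r) * (2 * r) ^ (α + s)) (Ioo (-((2 * r) ^ (2 * s))) 0)
          (ball (0 : En n) (2 * r))
          (fun t x => w t x - ∑ i, ∑ j, x i * A₂ i j * x j) →
        -- conclusion: `‖A_{2r} - A_r‖ ≤ C θ(r) r^{α+β+s-2}`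
        ∀ x : En n, ‖x‖ = 1 →
          |∑ i, ∑ j, x i * (A₂ - A₁) i j * x j| ≤ C * θf r * r ^ (α + β + s - 2) :=
  stmt_11_general n s α β hs hβ
end
end

section
/- Let s ∈ (0,1), β ∈ (0,1) and α > 0 with α+β < 2s. Let w : (−∞,0)×ℝ^n → ℝ be continuous with w(t,x) = 0 whenever x_n ≤ 0, and suppose that for every τ ≤ 0 and every h ∈ ℝ^n with h_n = 0 there exists a constant K(τ,h) ∈ ℝ such that w(t+τ, x+h) − w(t,x) = K(τ,h)·(x_n)_+^s for all (t,x) ∈ (−∞,0)×ℝ^n. Assume furthermore the growth condition [w/(x_n)_+^s]_{C_{t,x}^{β/(2s),β}(Q_R^+)} ≤ C R^α for all R ≥ 1 and some constant C > 0. Then w is independent of t, and there exist a ∈ ℝ^n, b ∈ ℝ and a function ψ : ℝ → ℝ with ψ = 0 on (−∞,0] such that w(t,x) = (x_n)_+^s·(a·x + b) + ψ(x_n) for all (t,x). -/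
open Set MeasureTheory Metric Topology Filter
noncomputable section

/-!
Normalise the increment constants at `(t, x) = (-1, e_n)`, where `(x_n)_+^s = 1`:
`K(τ, h) = w(τ - 1, e_n + h) - w(-1, e_n)`. Composing increments makes `K` additive in `(τ, h)`,
and the growth bound evaluated at `e_n` and `e_n + h` gives
`|K(τ, h)| ≤ C R^α (|τ|^{β/2s} + |h|^β)` as long as these points lie in `Q_R^+`.

In time, `K(mτ, 0) = m K(τ, 0)`, while at the scale `R^{2s} ≈ m|τ|` the bound only allows growth
like `m^{(α+β)/2s}`, which is sublinear because `α + β < 2s`; so `K(τ, 0) = 0` and `w` does not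
depend on `t`. In space, `h ↦ K(0, h')` (with `h' = h - h_n e_n`) is additive and Hölder
continuous at `0`, hence linear, `K(0, h') = a · h`. Writing `x = x_n e_n + x'` then gives
`w(x) = w(x_n e_n) + (a · x) (x_n)_+^s`.
-/

section LastCoordinate

variable {n : ℕ}

lemma lastC_add (x y : En n) : lastC (x + y) = lastC x + lastC y := by
  unfold lastC; split <;> simp

lemma lastC_smul (c : ℝ) (x : En n) : lastC (c • x) = c * lastC x := by
  unfold lastC; split <;> simp

lemma lastC_sub (x y : En n) : lastC (x - y) = lastC x - lastC y := by
  unfold lastC; split <;> simp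

lemma lastC_zero : lastC (0 : En n) = 0 := by
  simpa using lastC_smul 0 (0 : En n)

lemma abs_lastC_le (x : En n) : |lastC x| ≤ ‖x‖ := by
  unfold lastC; split
  · exact PiLp.norm_apply_le x _
  · simp

lemma lastC_eLast (hn : 0 < n) : lastC (eLast n) = 1 := by
  simp [lastC, eLast, hn]

lemma norm_eLast (hn : 0 < n) : ‖eLast n‖ = 1 := by
  simp [eLast, hn]

lemma lastC_smul_eLast (hn : 0 < n) (c : ℝ) : lastC (c • eLast n) = c := by
  rw [lastC_smul, lastC_eLast hn, mul_one]

lemma lastC_eLast_add (hn : 0 < n) {h : En n} (hh : lastC h = 0) : lastC (eLast n + h) = 1 := by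
  rw [lastC_add, lastC_eLast hn, hh, add_zero]

def tangProj (x : En n) : En n := x - lastC x • eLast n

lemma lastC_tangProj (hn : 0 < n) (x : En n) : lastC (tangProj x) = 0 := by
  rw [tangProj, lastC_sub, lastC_smul_eLast hn, sub_self]

lemma tangProj_add (x y : En n) : tangProj (x + y) = tangProj x + tangProj y := by
  simp only [tangProj, lastC_add, add_smul]; abel

lemma norm_tangProj_le (hn : 0 < n) (x : En n) : ‖tangProj x‖ ≤ 2 * ‖x‖ :=
  calc ‖tangProj x‖ ≤ ‖x‖ + |lastC x| * ‖eLast n‖ := by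
        rw [← Real.norm_eq_abs, ← norm_smul]; exact norm_sub_le _ _
    _ ≤ 2 * ‖x‖ := by rw [norm_eLast hn]; linarith [abs_lastC_le x]

lemma lastC_smul_eLast_add_tangProj (x : En n) : lastC x • eLast n + tangProj x = x := by
  rw [tangProj]; abel

end LastCoordinate

lemma eq_zero_of_nat_mul_abs_le_rpow {a D γ : ℝ} (hγ : γ < 1)
    (h : ∀ m : ℕ, 1 ≤ m → m * |a| ≤ D * (m : ℝ) ^ γ) : a = 0 := by
  have hlim : Tendsto (fun m : ℕ => D * (m : ℝ) ^ (γ - 1)) atTop (𝓝 0) := by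
    have := ((tendsto_rpow_neg_atTop (sub_pos.2 hγ)).comp
      tendsto_natCast_atTop_atTop).const_mul D
    simpa [Function.comp_def] using this
  refine abs_nonpos_iff.1 (ge_of_tendsto hlim (eventually_atTop.2 ⟨1, fun m hm => ?_⟩))
  have hm : (0 : ℝ) < m := by exact_mod_cast hm
  rw [Real.rpow_sub_one hm.ne', ← mul_div_assoc, le_div_iff₀ hm, mul_comm]
  exact h m (by exact_mod_cast hm)

lemma AddMonoidHom.continuous_of_abs_le_rpow {E : Type*} [SeminormedAddCommGroup E]
    (f : E →+ ℝ) {M β δ : ℝ} (hβ : 0 < β) (hδ : 0 < δ)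
    (hf : ∀ h : E, ‖h‖ ≤ δ → |f h| ≤ M * ‖h‖ ^ β) : Continuous f := by
  refine continuous_of_tendsto_nhds_zero f
    (squeeze_zero_norm' (a := fun h => M * ‖h‖ ^ β) ?_ ?_)
  · filter_upwards [Metric.closedBall_mem_nhds (0 : E) hδ] with h hh
    exact hf h (by simpa using hh)
  · have : Continuous fun h : E => M * ‖h‖ ^ β := by fun_prop (disch := exact hβ.le)
    simpa [Real.zero_rpow hβ.ne'] using this.tendsto 0

lemma AddMonoidHom.exists_eq_sum_mul_of_continuous {ι : Type*} [Fintype ι]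
    (f : EuclideanSpace ℝ ι →+ ℝ) (hf : Continuous f) :
    ∃ a : EuclideanSpace ℝ ι, ∀ x, f x = ∑ i, a i * x i := by
  refine ⟨(InnerProductSpace.toDual ℝ _).symm (f.toRealLinearMap hf), fun x => ?_⟩
  rw [← f.coe_toRealLinearMap hf, ← InnerProductSpace.toDual_symm_apply, PiLp.inner_apply]
  simp [mul_comm]

section Increments

variable {n : ℕ} {s α β C : ℝ} {w : ℝ → En n → ℝ}

def HasProportionalIncrements (s : ℝ) (w : ℝ → En n → ℝ) : Prop :=
  ∀ τ ≤ (0 : ℝ), ∀ h : En n, lastC h = 0 → ∃ K : ℝ,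
    ∀ t < (0 : ℝ), ∀ x : En n, w (t + τ) (x + h) - w t x = K * max (lastC x) 0 ^ s

def HasParabolicGrowth (s α β C : ℝ) (w : ℝ → En n → ℝ) : Prop :=
  ∀ R ≥ (1 : ℝ), ParHolderBnd s β (C * R ^ α) (Ioo (-(R ^ (2 * s))) 0)
    (ball (0 : En n) R ∩ {x | 0 < lastC x}) (fun t x => w t x / max (lastC x) 0 ^ s)

/-- The constant `K(τ, h)` of `HasProportionalIncrements`, read off at `(t, x) = (-1, e_n)`,
where `(x_n)_+^s = 1`. -/
def incrConst (w : ℝ → En n → ℝ) (τ : ℝ) (h : En n) : ℝ :=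
  w (-1 + τ) (eLast n + h) - w (-1) (eLast n)

lemma sub_eq_incrConst_mul (hn : 0 < n) (hw : HasProportionalIncrements s w) {τ : ℝ}
    (hτ : τ ≤ 0) {h : En n} (hh : lastC h = 0) {t : ℝ} (ht : t < 0) (x : En n) :
    w (t + τ) (x + h) - w t x = incrConst w τ h * max (lastC x) 0 ^ s := by
  obtain ⟨K, hK⟩ := hw τ hτ h hh
  have hK_eq : incrConst w τ h = K := by
    simpa [incrConst, lastC_eLast hn] using hK (-1) (by norm_num) (eLast n)
  rw [hK_eq, hK t ht x]

lemma sub_eq_incrConst (hn : 0 < n) (hw : HasProportionalIncrements s w) {τ : ℝ}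
    (hτ : τ ≤ 0) {h : En n} (hh : lastC h = 0) {t : ℝ} (ht : t < 0) {x : En n}
    (hx : lastC x = 1) : w (t + τ) (x + h) - w t x = incrConst w τ h := by
  simpa [hx] using sub_eq_incrConst_mul hn hw hτ hh ht x

lemma incrConst_add (hn : 0 < n) (hw : HasProportionalIncrements s w) {τ τ' : ℝ}
    (hτ : τ ≤ 0) (hτ' : τ' ≤ 0) {h h' : En n} (hh : lastC h = 0) (hh' : lastC h' = 0) :
    incrConst w (τ + τ') (h + h') = incrConst w τ h + incrConst w τ' h' := by
  have hstep := sub_eq_incrConst hn hw hτ' hh' (t := -1 + τ) (by linarith)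
    (lastC_eLast_add hn hh)
  simp only [incrConst, ← add_assoc] at hstep ⊢
  linarith

lemma incrConst_nat_mul (hn : 0 < n) (hw : HasProportionalIncrements s w) {τ : ℝ}
    (hτ : τ ≤ 0) (m : ℕ) : incrConst w (m * τ) 0 = m * incrConst w τ 0 := by
  induction m with
  | zero => simp [incrConst]
  | succ k ih =>
    have hkτ : (k : ℝ) * τ ≤ 0 := mul_nonpos_of_nonneg_of_nonpos k.cast_nonneg hτ
    have := incrConst_add hn hw hkτ hτ lastC_zero lastC_zero (w := w)
    rw [add_zero, ← add_one_mul, ih] at this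
    push_cast
    linarith

lemma abs_incrConst_le (hn : 0 < n) (hw : HasProportionalIncrements s w) {R : ℝ}
    (hR : ParHolderBnd s β (C * R ^ α) (Ioo (-(R ^ (2 * s))) 0)
      (ball (0 : En n) R ∩ {x | 0 < lastC x}) (fun t x => w t x / max (lastC x) 0 ^ s))
    {τ : ℝ} (hτ : τ ≤ 0) (hτR : 1 / 2 - τ < R ^ (2 * s)) {h : En n} (hh : lastC h = 0)
    (hhR : 1 + ‖h‖ < R) :
    |incrConst w τ h| ≤ C * R ^ α * (|τ| ^ (β / (2 * s)) + ‖h‖ ^ β) := by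
  have he : eLast n ∈ ball (0 : En n) R ∩ {x | 0 < lastC x} := by
    simp only [mem_inter_iff, mem_ball_zero_iff, mem_ofPred_eq, norm_eLast hn, lastC_eLast hn]
    exact ⟨by linarith [norm_nonneg h], one_pos⟩
  have heh : eLast n + h ∈ ball (0 : En n) R ∩ {x | 0 < lastC x} := by
    simp only [mem_inter_iff, mem_ball_zero_iff, mem_ofPred_eq, lastC_eLast_add hn hh]
    exact ⟨(norm_add_le _ _).trans_lt (by rwa [norm_eLast hn]), one_pos⟩
  have := hR (-1 / 2 + τ) ⟨by linarith, by linarith⟩ _ heh (-1 / 2) ⟨by linarith, by norm_num⟩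
    _ he
  simpa [lastC_eLast hn, lastC_eLast_add hn hh,
    sub_eq_incrConst hn hw hτ hh (t := -1 / 2) (by norm_num) (lastC_eLast hn)] using this

lemma incrConst_time_eq_zero (hn : 0 < n) (hw : HasProportionalIncrements s w)
    (hgrowth : HasParabolicGrowth s α β C w) (hs : 0 < s) (hβ : 0 < β)
    (hαβ : α + β < 2 * s) {τ : ℝ} (hτ : τ ≤ 0) : incrConst w τ 0 = 0 := by
  obtain ⟨c, hc, rfl⟩ : ∃ c, 0 ≤ c ∧ τ = -c := ⟨-τ, by linarith, by ring⟩
  refine eq_zero_of_nat_mul_abs_le_rpow (γ := (α + β) / (2 * s))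
    (D := C * 2 ^ α * (c + 1) ^ (α / (2 * s)) * c ^ (β / (2 * s)))
    ((div_lt_one (by positivity)).2 hαβ) fun m hm => ?_
  have hm : (1 : ℝ) ≤ m := by exact_mod_cast hm
  -- the scale `R = 2 X` with `X^{2s} = m (c + 1)` is just large enough for the time lag `-m c`
  set X := ((m : ℝ) * (c + 1)) ^ (2 * s)⁻¹
  have hX1 : 1 ≤ X := Real.one_le_rpow (by nlinarith) (by positivity)
  have hX2s : X ^ (2 * s) = m * (c + 1) := Real.rpow_inv_rpow (by positivity) (by positivity)
  have hXα : X ^ α = ((m : ℝ) * (c + 1)) ^ (α / (2 * s)) := by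
    rw [← Real.rpow_mul (by positivity), inv_mul_eq_div]
  have hscale : 1 / 2 - m * -c < (2 * X) ^ (2 * s) := by
    have h2 : (1 : ℝ) ≤ 2 ^ (2 * s) := Real.one_le_rpow (by norm_num) (by positivity)
    rw [Real.mul_rpow (by norm_num) (by positivity), hX2s]
    nlinarith [le_mul_of_one_le_left (by positivity : (0 : ℝ) ≤ m * (c + 1)) h2]
  have hbound := abs_incrConst_le hn hw (hgrowth (2 * X) (by linarith))
    (mul_nonpos_of_nonneg_of_nonpos (by positivity) hτ) hscale lastC_zero
    (by rw [norm_zero]; linarith)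
  calc (m : ℝ) * |incrConst w (-c) 0| = |incrConst w (m * -c) 0| := by
        rw [incrConst_nat_mul hn hw hτ, abs_mul, Nat.abs_cast]
    _ ≤ C * (2 * X) ^ α * (|m * -c| ^ (β / (2 * s)) + ‖(0 : En n)‖ ^ β) := hbound
    _ = C * 2 ^ α * (c + 1) ^ (α / (2 * s)) * c ^ (β / (2 * s)) * m ^ ((α + β) / (2 * s)) := by
      rw [norm_zero, Real.zero_rpow hβ.ne', add_zero, Real.mul_rpow (by norm_num) (by positivity),
        hXα, abs_mul, Nat.abs_cast, abs_neg, abs_of_nonneg hc, Real.mul_rpow (by positivity) hc,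
        Real.mul_rpow (by positivity) (by positivity), add_div,
        Real.rpow_add (by positivity)]
      ring

lemma eq_of_forall_incrConst_time_eq_zero (hn : 0 < n) (hw : HasProportionalIncrements s w)
    (htime : ∀ τ ≤ (0 : ℝ), incrConst w τ 0 = 0) :
    ∀ t < (0 : ℝ), ∀ t' < (0 : ℝ), ∀ x : En n, w t x = w t' x := by
  have hshift : ∀ t < (0 : ℝ), ∀ τ ≤ (0 : ℝ), ∀ x : En n, w (t + τ) x = w t x := by
    intro t ht τ hτ x
    simpa [htime τ hτ, sub_eq_zero] using sub_eq_incrConst_mul hn hw hτ lastC_zero ht x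
  intro t ht t' ht' x
  rcases le_total t' t with h | h
  · simpa using (hshift t ht (t' - t) (by linarith) x).symm
  · simpa using hshift t' ht' (t - t') (by linarith) x

lemma exists_incrConst_tangProj_eq_sum (hn : 0 < n) (hw : HasProportionalIncrements s w)
    (hgrowth : HasParabolicGrowth s α β C w) (hs : 0 < s) (hβ : 0 < β) (hC : 0 ≤ C) :
    ∃ a : En n, ∀ x : En n, incrConst w 0 (tangProj x) = ∑ i, a i * x i := by
  let L : En n →+ ℝ := AddMonoidHom.mk' (fun x => incrConst w 0 (tangProj x)) fun x y => by
    simpa [tangProj_add] using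
      incrConst_add hn hw le_rfl le_rfl (lastC_tangProj hn x) (lastC_tangProj hn y)
  have hL : Continuous L := by
    refine L.continuous_of_abs_le_rpow (M := C * 3 ^ α * 2 ^ β) hβ one_half_pos fun x hx => ?_
    have hpx := norm_tangProj_le hn x
    have h3 : 1 / 2 - 0 < (3 : ℝ) ^ (2 * s) := by
      linarith [Real.one_le_rpow (by norm_num : (1 : ℝ) ≤ 3) (by positivity : 0 ≤ 2 * s)]
    have := abs_incrConst_le hn hw (hgrowth 3 (by norm_num)) le_rfl h3 (lastC_tangProj hn x)
      (by linarith)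
    calc |L x| ≤ C * 3 ^ α * ‖tangProj x‖ ^ β := by
          simpa [L, Real.zero_rpow (div_pos hβ (by positivity : 0 < 2 * s)).ne'] using this
      _ ≤ C * 3 ^ α * (2 * ‖x‖) ^ β := by gcongr
      _ = C * 3 ^ α * 2 ^ β * ‖x‖ ^ β := by
        rw [Real.mul_rpow (by norm_num) (norm_nonneg x)]; ring
  exact L.exists_eq_sum_mul_of_continuous hL

lemma eq_posPart_rpow_mul_add (hn : 0 < n) (hw : HasProportionalIncrements s w) {t : ℝ}
    (ht : t < 0) (x : En n) :
    w t x = max (lastC x) 0 ^ s * incrConst w 0 (tangProj x) + w t (lastC x • eLast n) := by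
  have := sub_eq_incrConst_mul hn hw le_rfl (lastC_tangProj hn x) ht (lastC x • eLast n)
  rw [add_zero, lastC_smul_eLast_add_tangProj, lastC_smul_eLast hn] at this
  linarith

end Increments

theorem stmt_14_general
    (n : ℕ) (s β α : ℝ)
    (hn : 0 < n) (hs : s ∈ Ioo (0 : ℝ) 1) (hβ : β ∈ Ioo (0 : ℝ) 1)
    (hαβ : α + β < 2 * s)
    (w : ℝ → En n → ℝ) (C : ℝ) (hC : 0 < C)
    -- `w = 0` whenever `x_n ≤ 0`
    (hbdry : ∀ t < (0 : ℝ), ∀ x : En n, lastC x ≤ 0 → w t x = 0)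
    -- tangential/time increments of `w` are multiples of `(x_n)_+^s`
    (hincr : ∀ τ ≤ (0 : ℝ), ∀ h : En n, lastC h = 0 → ∃ K : ℝ,
      ∀ t < (0 : ℝ), ∀ x : En n, w (t + τ) (x + h) - w t x = K * max (lastC x) 0 ^ s)
    -- growth control `[w/(x_n)_+^s]_{C^{β/2s,β}(Q_R^+)} ≤ C R^α`
    (hgrowth : ∀ R ≥ (1 : ℝ),
      ParHolderBnd s β (C * R ^ α) (Ioo (-(R ^ (2 * s))) 0)
        (ball (0 : En n) R ∩ {x | 0 < lastC x})
        (fun t x => w t x / max (lastC x) 0 ^ s)) :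
    -- `w` is independent of `t` and has the claimed form
    (∀ t < (0 : ℝ), ∀ t' < (0 : ℝ), ∀ x : En n, w t x = w t' x) ∧
    ∃ (a : En n) (b : ℝ) (ψ : ℝ → ℝ),
      (∀ z ≤ (0 : ℝ), ψ z = 0) ∧
      ∀ t < (0 : ℝ), ∀ x : En n,
        w t x = max (lastC x) 0 ^ s * ((∑ i, a i * x i) + b) + ψ (lastC x) := by
  have hind := eq_of_forall_incrConst_time_eq_zero hn hincr fun τ hτ =>
    incrConst_time_eq_zero hn hincr hgrowth hs.1 hβ.1 hαβ hτ
  obtain ⟨a, ha⟩ := exists_incrConst_tangProj_eq_sum hn hincr hgrowth hs.1 hβ.1 hC.le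
  refine ⟨hind, a, 0, fun z => w (-1) (z • eLast n), fun z hz => ?_, fun t ht x => ?_⟩
  · exact hbdry (-1) (by norm_num) _ (by rwa [lastC_smul_eLast hn])
  · rw [hind t ht (-1) (by norm_num), eq_posPart_rpow_mul_add hn hincr (by norm_num) x, ha,
      add_zero]

/-- one-dimensional reduction in the proof of the half-space Liouville
theorem. -/
theorem stmt_14
    (n : ℕ) (s β α : ℝ)
    (hn : 0 < n) (hs : s ∈ Ioo (0 : ℝ) 1) (hβ : β ∈ Ioo (0 : ℝ) 1) (hα : 0 < α)
    (hαβ : α + β < 2 * s)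
    (w : ℝ → En n → ℝ) (C : ℝ) (hC : 0 < C)
    -- `w` is continuous on `(-∞,0) × ℝ^n`
    (hcont : ContinuousOn (fun p : ℝ × En n => w p.1 p.2) (Iio (0 : ℝ) ×ˢ univ))
    -- `w = 0` whenever `x_n ≤ 0`
    (hbdry : ∀ t < (0 : ℝ), ∀ x : En n, lastC x ≤ 0 → w t x = 0)
    -- tangential/time increments of `w` are multiples of `(x_n)_+^s`
    (hincr : ∀ τ ≤ (0 : ℝ), ∀ h : En n, lastC h = 0 → ∃ K : ℝ,
      ∀ t < (0 : ℝ), ∀ x : En n, w (t + τ) (x + h) - w t x = K * max (lastC x) 0 ^ s)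
    -- growth control `[w/(x_n)_+^s]_{C^{β/2s,β}(Q_R^+)} ≤ C R^α`
    (hgrowth : ∀ R ≥ (1 : ℝ),
      ParHolderBnd s β (C * R ^ α) (Ioo (-(R ^ (2 * s))) 0)
        (ball (0 : En n) R ∩ {x | 0 < lastC x})
        (fun t x => w t x / max (lastC x) 0 ^ s)) :
    -- `w` is independent of `t` and has the claimed form
    (∀ t < (0 : ℝ), ∀ t' < (0 : ℝ), ∀ x : En n, w t x = w t' x) ∧
    ∃ (a : En n) (b : ℝ) (ψ : ℝ → ℝ),
      (∀ z ≤ (0 : ℝ), ψ z = 0) ∧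
      ∀ t < (0 : ℝ), ∀ x : En n,
        w t x = max (lastC x) 0 ^ s * ((∑ i, a i * x i) + b) + ψ (lastC x) :=
  stmt_14_general n s β α hn hs hβ hαβ w C hC hbdry hincr hgrowth
end
end
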